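/- Let r ≥ 3 and let H be a connected r-uniform hypergraph with spectral radius ρ(H) ≤ (r−1)!·(2+√5)^{1/r}. If H is not simple — that is, some two edges of H share at least two vertices — then H = C_2^{(r)}, the r-uniform hypergraph consisting of exactly two edges sharing exactly two common vertices. -/

import Mathlib

open Finset

/-- A hypergraph on vertex type `V`, given by its finite set of edges. -/
structure FinHypergraph (V : Type) [DecidableEq V] where
  edges : Finset (Finset V)

namespace FinHypergraph

variable {V : Type} [DecidableEq V]

/-- The vertex set of `H`: all vertices lying in some edge. -/
def vertexSet (H : FinHypergraph V) : Finset V := H.edges.biUnion id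

/-- `H` is `r`-uniform: every edge has exactly `r` vertices. -/
def IsUniform (H : FinHypergraph V) (r : ℕ) : Prop := ∀ e ∈ H.edges, e.card = r

/-- The degree of a vertex: the number of edges containing it. -/
def degree (H : FinHypergraph V) (v : V) : ℕ := (H.edges.filter fun e => v ∈ e).card

/-- The spectral radius of an `r`-uniform hypergraph `H`:
`ρ(H) = r! · max{ (∑_{e ∈ E} ∏_{v ∈ e} x_v) / (∑_v x_v ^ r) : x ≥ 0, x ≠ 0 }`. -/
noncomputable def spectralRadius (H : FinHypergraph V) (r : ℕ) : ℝ :=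
  (Nat.factorial r : ℝ) *
    sSup {t : ℝ | ∃ x : V → ℝ, (∀ v, 0 ≤ x v) ∧ (∃ v ∈ H.vertexSet, x v ≠ 0) ∧
      t = (∑ e ∈ H.edges, ∏ v ∈ e, x v) / (∑ v ∈ H.vertexSet, x v ^ r)}

/-- `v, e` form a walk `v 0, e 0, v 1, e 1, …, e (l-1), v l` in `H`. -/
def IsWalkSeq (H : FinHypergraph V) {l : ℕ} (v : Fin (l + 1) → V) (e : Fin l → Finset V) : Prop :=
  ∀ i : Fin l, e i ∈ H.edges ∧ v i.castSucc ∈ e i ∧ v i.succ ∈ e i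

/-- `H` is connected: every two vertices are joined by a walk. -/
def Connected (H : FinHypergraph V) : Prop :=
  ∀ u ∈ H.vertexSet, ∀ w ∈ H.vertexSet,
    ∃ (l : ℕ) (v : Fin (l + 1) → V) (e : Fin l → Finset V),
      H.IsWalkSeq v e ∧ v 0 = u ∧ v (Fin.last l) = w

/-- The cyclic successor on `Fin l`. -/
def cyc {l : ℕ} (i : Fin l) : Fin l := ⟨((i : ℕ) + 1) % l, Nat.mod_lt _ i.pos⟩

/-- `v, e` form a cycle `v 0, e 0, v 1, e 1, …, e (l-1), v 0` of length `l` in `H`,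
with all vertices and all edges distinct. -/
def IsCycleSeq (H : FinHypergraph V) {l : ℕ} (v : Fin l → V) (e : Fin l → Finset V) : Prop :=
  Function.Injective v ∧ Function.Injective e ∧
    ∀ i : Fin l, e i ∈ H.edges ∧ v i ∈ e i ∧ v (cyc i) ∈ e i

/-- `H` contains a cycle. -/
def HasCycle (H : FinHypergraph V) : Prop :=
  ∃ l : ℕ, 2 ≤ l ∧ ∃ (v : Fin l → V) (e : Fin l → Finset V), H.IsCycleSeq v e

/-- A hypertree: connected and acyclic. -/
def IsHypertree (H : FinHypergraph V) : Prop := H.Connected ∧ ¬H.HasCycle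

/-- `H` is irreducible: some edge has all of its vertices of degree at least `2`. -/
def Irreducible (H : FinHypergraph V) : Prop := ∃ e ∈ H.edges, ∀ v ∈ e, 2 ≤ H.degree v

/-- `H` is simple: distinct edges share at most one vertex. -/
def IsSimple (H : FinHypergraph V) : Prop :=
  ∀ e ∈ H.edges, ∀ f ∈ H.edges, e ≠ f → (e ∩ f).card ≤ 1

/-- `C_2^{(r)}`: exactly two edges sharing exactly two common vertices. -/
def IsC2 (H : FinHypergraph V) : Prop :=
  ∃ e f : Finset V, e ≠ f ∧ H.edges = {e, f} ∧ (e ∩ f).card = 2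

end FinHypergraph

open FinHypergraph

section AuxLemmas

variable {V : Type} [DecidableEq V]

lemma aux_edge_subset {H : FinHypergraph V} {e : Finset V}
    (he : e ∈ H.edges) : e ⊆ H.vertexSet :=
  fun v hv => Finset.mem_biUnion.mpr ⟨e, he, hv⟩

lemma aux_rho_ge (H : FinHypergraph V) (r : ℕ) (hr : 0 < r)
    (huni : H.IsUniform r) (x : V → ℝ) (hx0 : ∀ v, 0 ≤ x v)
    (v0 : V) (hv0 : v0 ∈ H.vertexSet) (hv0x : x v0 ≠ 0) :
    (Nat.factorial r : ℝ) *
      ((∑ e ∈ H.edges, ∏ v ∈ e, x v) / (∑ v ∈ H.vertexSet, x v ^ r)) ≤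
      H.spectralRadius r := by
  unfold FinHypergraph.spectralRadius
  refine mul_le_mul_of_nonneg_left ?_ (by positivity)
  refine le_csSup ?_ ⟨x, hx0, ⟨v0, hv0, hv0x⟩, rfl⟩
  refine ⟨(H.edges.card : ℝ), ?_⟩
  rintro t ⟨y, hy0, ⟨v, hv, hvy⟩, rfl⟩
  have hD : 0 < ∑ w ∈ H.vertexSet, y w ^ r := by
    have h1 : 0 < y v ^ r := pow_pos (lt_of_le_of_ne (hy0 v) (Ne.symm hvy)) r
    exact lt_of_lt_of_le h1 (Finset.single_le_sum (fun i _ => pow_nonneg (hy0 i) r) hv)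
  rw [div_le_iff₀ hD]
  calc ∑ e ∈ H.edges, ∏ w ∈ e, y w
      ≤ ∑ _e ∈ H.edges, (∑ w ∈ H.vertexSet, y w ^ r) := by
        refine Finset.sum_le_sum fun e he => ?_
        have hce : e.card = r := huni e he
        have hne : e.Nonempty := Finset.card_pos.mp (by omega)
        obtain ⟨b, hb, hmax⟩ := Finset.exists_max_image e y hne
        calc ∏ w ∈ e, y w ≤ ∏ _w ∈ e, y b :=
              Finset.prod_le_prod (fun i _ => hy0 i) (fun i hi => hmax i hi)
          _ = y b ^ r := by rw [Finset.prod_const, hce]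
          _ ≤ ∑ w ∈ H.vertexSet, y w ^ r :=
              Finset.single_le_sum (fun i _ => pow_nonneg (hy0 i) r)
                (aux_edge_subset he hb)
    _ = (H.edges.card : ℝ) * (∑ w ∈ H.vertexSet, y w ^ r) := by
        rw [Finset.sum_const, nsmul_eq_mul]

lemma aux_transition {p : ℕ → Prop} : ∀ l : ℕ, p 0 → ¬ p l →
    ∃ i, i < l ∧ p i ∧ ¬ p (i + 1) := by
  intro l
  induction l with
  | zero => intro h0 hl; exact absurd h0 hl
  | succ n ih =>
    intro h0 hl
    by_cases hn : p n
    · exact ⟨n, n.lt_succ_self, hn, hl⟩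
    · obtain ⟨i, hi, h⟩ := ih h0 hn
      exact ⟨i, hi.trans n.lt_succ_self, h⟩

/-- If `H` is connected and has an edge `g₀` other than `e, f`, then it has an edge other
than `e, f` meeting `e ∪ f`. -/
lemma aux_touching {H : FinHypergraph V} (hconn : H.Connected)
    {e f g0 : Finset V} (he : e ∈ H.edges) (_hf : f ∈ H.edges) (hg0 : g0 ∈ H.edges)
    (hg0e : g0 ≠ e) (hg0f : g0 ≠ f) (hene : e.Nonempty) (hg0ne : g0.Nonempty) :
    ∃ g ∈ H.edges, g ≠ e ∧ g ≠ f ∧ (g ∩ (e ∪ f)).Nonempty := by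
  by_cases htouch : (g0 ∩ (e ∪ f)).Nonempty
  · exact ⟨g0, hg0, hg0e, hg0f, htouch⟩
  · obtain ⟨u, hu⟩ := hene
    obtain ⟨w, hw⟩ := hg0ne
    have hwA : w ∉ e ∪ f := fun hmem =>
      htouch ⟨w, Finset.mem_inter.mpr ⟨hw, hmem⟩⟩
    obtain ⟨l, v, ed, hwalk, hv0, hvl⟩ :=
      hconn u (aux_edge_subset he hu) w (aux_edge_subset hg0 hw)
    have hp0 : v ⟨min 0 l, by omega⟩ ∈ e ∪ f := by
      have h0 : (⟨min 0 l, by omega⟩ : Fin (l + 1)) = 0 := by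
        ext; simp
      rw [h0, hv0]; exact Finset.mem_union_left _ hu
    have hpl : v ⟨min l l, by omega⟩ ∉ e ∪ f := by
      have h0 : (⟨min l l, by omega⟩ : Fin (l + 1)) = Fin.last l := by
        ext; simp [Fin.last]
      rw [h0, hvl]; exact hwA
    obtain ⟨i, hil, hpi, hpi1⟩ :=
      aux_transition (p := fun j => v ⟨min j l, by omega⟩ ∈ e ∪ f) l hp0 hpl
    have hmi : (⟨min i l, by omega⟩ : Fin (l + 1)) = (⟨i, by omega⟩ : Fin (l + 1)) := by
      ext; simp [min_eq_left hil.le]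
    have hmi1 : (⟨min (i + 1) l, by omega⟩ : Fin (l + 1)) = (⟨i + 1, by omega⟩ : Fin (l + 1)) := by
      ext; simp [min_eq_left (by omega : i + 1 ≤ l)]
    rw [hmi] at hpi
    rw [hmi1] at hpi1
    obtain ⟨hEmem, hvi, hvi1⟩ := hwalk ⟨i, hil⟩
    have hcs : (⟨i, hil⟩ : Fin l).castSucc = (⟨i, by omega⟩ : Fin (l + 1)) := rfl
    have hsc : (⟨i, hil⟩ : Fin l).succ = (⟨i + 1, by omega⟩ : Fin (l + 1)) := rfl
    rw [hcs] at hvi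
    rw [hsc] at hvi1
    refine ⟨ed ⟨i, hil⟩, hEmem, ?_, ?_, ⟨v ⟨i, by omega⟩, Finset.mem_inter.mpr ⟨hvi, hpi⟩⟩⟩
    · rintro rfl; exact hpi1 (Finset.mem_union_left _ hvi1)
    · rintro rfl; exact hpi1 (Finset.mem_union_right _ hvi1)

lemma aux_rpow_self {b : ℝ} (hb : 0 ≤ b) {r : ℕ} (hr : r ≠ 0) :
    (b ^ ((1:ℝ)/r)) ^ r = b := by
  rw [← Real.rpow_natCast (b ^ ((1:ℝ)/r)) r, ← Real.rpow_mul hb,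
    one_div_mul_cancel (by exact_mod_cast hr), Real.rpow_one]

lemma aux_rpow_pow {b : ℝ} (hb : 0 ≤ b) (r k : ℕ) :
    (b ^ ((1:ℝ)/r)) ^ (k:ℕ) = (b ^ (k:ℕ)) ^ ((1:ℝ)/r) := by
  rw [← Real.rpow_natCast (b ^ ((1:ℝ)/r)) k, ← Real.rpow_mul hb,
    ← Real.rpow_natCast b k, ← Real.rpow_mul hb, mul_comm]

lemma aux_sqrt5 : Real.sqrt 5 < 22/9 :=
  (Real.sqrt_lt' (by norm_num)).mpr (by norm_num)

lemma aux_keyA (r : ℕ) (hr : 3 ≤ r) :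
    (2 + Real.sqrt 5) ^ ((1:ℝ)/r) < (8:ℝ) ^ ((1:ℝ)/r) := by
  refine Real.rpow_lt_rpow (by positivity) ?_ (by positivity)
  have := aux_sqrt5; linarith

lemma aux_keyB (r : ℕ) (hr : 3 ≤ r) :
    (2 + Real.sqrt 5) ^ ((1:ℝ)/r) <
      (9*r/(9*r-1)) * (4:ℝ) ^ ((1:ℝ)/r) := by
  have hrR : (3:ℝ) ≤ (r:ℝ) := by exact_mod_cast hr
  have hr0 : r ≠ 0 := by omega
  have hden : (0:ℝ) < 9*r - 1 := by linarith
  have h25 : (0:ℝ) ≤ 2 + Real.sqrt 5 := by positivity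
  set B : ℝ := (2 + Real.sqrt 5) ^ ((1:ℝ)/r) with hB
  set A : ℝ := (9*r/(9*r-1)) * (4:ℝ) ^ ((1:ℝ)/r) with hA
  have hA0 : 0 ≤ A := by
    have : (0:ℝ) ≤ (4:ℝ) ^ ((1:ℝ)/r) := by positivity
    have h9 : (0:ℝ) ≤ 9*r/(9*r-1) := by positivity
    exact mul_nonneg h9 this
  refine lt_of_pow_lt_pow_left₀ r hA0 ?_
  have hBr : B ^ r = 2 + Real.sqrt 5 := aux_rpow_self h25 hr0
  have hQr : ((4:ℝ) ^ ((1:ℝ)/r)) ^ r = 4 := aux_rpow_self (by norm_num) hr0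
  have hAr : A ^ r = (9*r/(9*r-1)) ^ r * 4 := by rw [hA, mul_pow, hQr]
  have hsplit : (9*(r:ℝ))/(9*r-1) = 1 + 1/(9*r-1) := by rw [one_add_div hden.ne']; ring
  have hber : 1 + (r:ℝ) * (1/(9*r-1)) ≤ (1 + 1/(9*r-1)) ^ r := by
    refine one_add_mul_le_pow ?_ r
    have : (0:ℝ) ≤ 1/(9*(r:ℝ)-1) := by positivity
    linarith
  have h19 : (10:ℝ)/9 ≤ 1 + (r:ℝ) * (1/(9*r-1)) := by
    have h1 : (1:ℝ)/9 ≤ (r:ℝ)/(9*r-1) := by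
      rw [div_le_div_iff₀ (by norm_num) hden]; linarith
    rw [mul_one_div]; linarith
  have hpow : (10:ℝ)/9 ≤ (9*(r:ℝ)/(9*r-1)) ^ r := by
    rw [hsplit]; linarith
  have hBrval : B ^ r < 40/9 := by
    rw [hBr]; have := aux_sqrt5; linarith
  have hArval : (40:ℝ)/9 ≤ A ^ r := by
    rw [hAr]
    nlinarith [hpow]
  linarith

end AuxLemmas


/-- **Lemma (non-simple case).**  For `r ≥ 3`, a connected `r`-uniform hypergraph with
spectral radius at most `(r−1)!·(2+√5)^{1/r}` which is not simple must be `C_2^{(r)}`. -/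
theorem isC2_of_not_simple {V : Type} [DecidableEq V] (r : ℕ) (hr : 3 ≤ r)
    (H : FinHypergraph V) (huni : H.IsUniform r) (hconn : H.Connected)
    (hrho : H.spectralRadius r ≤
      (Nat.factorial (r - 1) : ℝ) * (2 + Real.sqrt 5) ^ ((1 : ℝ) / (r : ℝ)))
    (hns : ¬H.IsSimple) : H.IsC2 := by
  classical
  rw [FinHypergraph.IsSimple] at hns
  push_neg at hns
  obtain ⟨e, he, f, hf, hef, hcard⟩ := hns
  have hr0 : 0 < r := by omega
  have hrne : r ≠ 0 := by omega
  have hrR : (3:ℝ) ≤ (r:ℝ) := by exact_mod_cast hr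
  have hce : e.card = r := huni e he
  have hcf : f.card = r := huni f hf
  set q : ℝ := (2:ℝ) ^ ((1:ℝ)/r) with hqdef
  have hq0 : 0 < q := Real.rpow_pos_of_pos (by norm_num) _
  have hq1 : 1 ≤ q := by
    calc (1:ℝ) = (1:ℝ) ^ ((1:ℝ)/(r:ℝ)) := (Real.one_rpow _).symm
      _ ≤ (2:ℝ) ^ ((1:ℝ)/(r:ℝ)) :=
        Real.rpow_le_rpow (by norm_num) (by norm_num) (by positivity)
  have hqr : q ^ r = 2 := aux_rpow_self (by norm_num) hrne
  have h25 : (0:ℝ) ≤ 2 + Real.sqrt 5 := by positivity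
  have hfac : (Nat.factorial r : ℝ) = (r:ℝ) * (Nat.factorial (r-1) : ℝ) := by
    rw [← Nat.mul_factorial_pred hrne]; push_cast; ring
  have hfacpos : (0:ℝ) < (Nat.factorial (r-1) : ℝ) := by
    exact_mod_cast Nat.factorial_pos (r-1)
  have hifsub : e ∩ f ⊆ e ∪ f := Finset.inter_subset_left.trans Finset.subset_union_left
  by_cases h3 : 3 ≤ (e ∩ f).card
  · -- Case A: two edges share at least 3 vertices
    exfalso
    set x : V → ℝ := fun v => if v ∈ e ∩ f then q else if v ∈ e ∪ f then 1 else 0 with hxdef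
    have hxval1 : ∀ v ∈ e ∩ f, x v = q := fun v hv => by rw [hxdef]; simp [hv]
    have hxval2 : ∀ v, v ∉ e ∩ f → v ∈ e ∪ f → x v = 1 := fun v h1 h2 => by
      rw [hxdef]; simp [h1, h2]
    have hxval3 : ∀ v, v ∉ e ∪ f → x v = 0 := fun v h2 => by
      have h1 : v ∉ e ∩ f := fun hc => h2 (hifsub hc)
      rw [hxdef]; simp [h1, h2]
    have hx0 : ∀ v, 0 ≤ x v := fun v => by
      rw [hxdef]; dsimp only; split_ifs <;> [linarith; norm_num; norm_num]
    obtain ⟨p, hp⟩ := Finset.card_pos.mp (show 0 < (e ∩ f).card by omega)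
    have hrho_ge := aux_rho_ge H r hr0 huni x hx0 p
      (aux_edge_subset he (Finset.mem_of_mem_inter_left hp))
      (by rw [hxval1 p hp]; exact ne_of_gt hq0)
    -- numerator lower bound
    have hq3 : q ^ 3 ≤ q ^ (e ∩ f).card := pow_le_pow_right₀ hq1 h3
    have hpe : ∏ v ∈ e, x v = q ^ (e ∩ f).card := by
      rw [← Finset.prod_sdiff (show e ∩ f ⊆ e from Finset.inter_subset_left),
        Finset.prod_eq_one (fun i hi => by
          obtain ⟨hi1, hi2⟩ := Finset.mem_sdiff.mp hi
          exact hxval2 i hi2 (Finset.mem_union_left _ hi1)), one_mul,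
        Finset.prod_eq_pow_card hxval1]
    have hpf : ∏ v ∈ f, x v = q ^ (e ∩ f).card := by
      rw [← Finset.prod_sdiff (show e ∩ f ⊆ f from Finset.inter_subset_right),
        Finset.prod_eq_one (fun i hi => by
          obtain ⟨hi1, hi2⟩ := Finset.mem_sdiff.mp hi
          exact hxval2 i hi2 (Finset.mem_union_right _ hi1)), one_mul,
        Finset.prod_eq_pow_card hxval1]
    have hNlow : 2 * q ^ 3 ≤ ∑ e' ∈ H.edges, ∏ v ∈ e', x v := by
      have hpair : ∑ e' ∈ ({e, f} : Finset (Finset V)), ∏ v ∈ e', x v ≤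
          ∑ e' ∈ H.edges, ∏ v ∈ e', x v := by
        refine Finset.sum_le_sum_of_subset_of_nonneg ?_
          (fun j _ _ => Finset.prod_nonneg fun i _ => hx0 i)
        intro j hj
        rw [Finset.mem_insert, Finset.mem_singleton] at hj
        rcases hj with rfl | rfl <;> assumption
      rw [Finset.sum_pair hef, hpe, hpf] at hpair
      linarith
    -- denominator
    have hDval : ∑ v ∈ H.vertexSet, x v ^ r = 2 * (r:ℝ) := by
      rw [← Finset.sum_subset
        (Finset.union_subset (aux_edge_subset he) (aux_edge_subset hf))
        (fun v _ hv => by rw [hxval3 v hv, zero_pow hrne])]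
      have hdecomp : e ∪ f = (e ∩ f) ∪ ((e ∪ f) \ (e ∩ f)) :=
        (Finset.union_sdiff_of_subset hifsub).symm
      rw [hdecomp, Finset.sum_union Finset.disjoint_sdiff]
      have hsum1 : ∑ v ∈ e ∩ f, x v ^ r = ((e ∩ f).card : ℝ) * 2 := by
        rw [Finset.sum_congr rfl (fun v hv => by rw [hxval1 v hv, hqr]),
          Finset.sum_const, nsmul_eq_mul]
      have hsum2 : ∑ v ∈ (e ∪ f) \ (e ∩ f), x v ^ r =
          (((e ∪ f) \ (e ∩ f)).card : ℝ) := by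
        rw [Finset.sum_congr rfl (fun v hv => by
          obtain ⟨hv1, hv2⟩ := Finset.mem_sdiff.mp hv
          rw [hxval2 v hv2 hv1, one_pow]), Finset.sum_const, nsmul_eq_mul, mul_one]
      rw [hsum1, hsum2]
      have hc1 : (e ∪ f).card + (e ∩ f).card = 2 * r := by
        rw [Finset.card_union_add_card_inter, hce, hcf]; ring
      have hc2 : ((e ∪ f) \ (e ∩ f)).card = (e ∪ f).card - (e ∩ f).card :=
        Finset.card_sdiff_of_subset hifsub
      have hc3 : (e ∩ f).card ≤ (e ∪ f).card := Finset.card_le_card hifsub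
      have hc4 : ((e ∪ f) \ (e ∩ f)).card + 2 * (e ∩ f).card = 2 * r := by omega
      have hc5 : (((e ∪ f) \ (e ∩ f)).card : ℝ) + 2 * ((e ∩ f).card : ℝ) = 2 * r := by
        exact_mod_cast hc4
      linarith
    rw [hDval] at hrho_ge
    have h8q : (8:ℝ) ^ ((1:ℝ)/r) = q ^ 3 := by
      rw [hqdef, aux_rpow_pow (by norm_num : (0:ℝ) ≤ 2) r 3]; norm_num
    have hstep : (Nat.factorial (r-1) : ℝ) * ((8:ℝ) ^ ((1:ℝ)/r)) ≤ H.spectralRadius r := by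
      calc (Nat.factorial (r-1) : ℝ) * ((8:ℝ) ^ ((1:ℝ)/r))
          = (Nat.factorial r : ℝ) * ((2 * q ^ 3) / (2 * (r:ℝ))) := by
            rw [hfac, h8q]; field_simp
        _ ≤ (Nat.factorial r : ℝ) *
            ((∑ e' ∈ H.edges, ∏ v ∈ e', x v) / (2 * (r:ℝ))) := by
            refine mul_le_mul_of_nonneg_left ?_ (by positivity)
            exact (div_le_div_iff_of_pos_right (by linarith)).mpr hNlow
        _ ≤ H.spectralRadius r := hrho_ge
    have hlt := mul_lt_mul_of_pos_left (aux_keyA r hr) hfacpos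
    linarith
  · have hs2 : (e ∩ f).card = 2 := by omega
    by_cases hsub : H.edges ⊆ {e, f}
    · -- H = C2
      refine ⟨e, f, hef, ?_, hs2⟩
      refine Finset.Subset.antisymm hsub ?_
      intro j hj
      rw [Finset.mem_insert, Finset.mem_singleton] at hj
      rcases hj with rfl | rfl <;> assumption
    · -- Case B: a third edge exists
      exfalso
      obtain ⟨g0, hg0mem, hg0notin⟩ := Finset.not_subset.mp hsub
      rw [Finset.mem_insert, Finset.mem_singleton] at hg0notin
      push_neg at hg0notin
      obtain ⟨hg0e, hg0f⟩ := hg0notin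
      have hene : e.Nonempty := Finset.card_pos.mp (by omega)
      have hg0ne : g0.Nonempty := by
        have := huni g0 hg0mem
        exact Finset.card_pos.mp (by omega)
      obtain ⟨g, hg, hge, hgf, w0, hw0⟩ :=
        aux_touching hconn he hf hg0mem hg0e hg0f hene hg0ne
      obtain ⟨hw0g, hw0A⟩ := Finset.mem_inter.mp hw0
      have hcg : g.card = r := huni g hg
      set Q : ℝ := (4:ℝ) ^ ((1:ℝ)/r) with hQdef
      set c : ℝ := ((1:ℝ)/4) ^ ((1:ℝ)/r) with hcdef
      have hc0 : 0 < c := Real.rpow_pos_of_pos (by norm_num) _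
      have hc1 : c ≤ 1 := Real.rpow_le_one (by norm_num) (by norm_num) (by positivity)
      have hQ0 : 0 < Q := Real.rpow_pos_of_pos (by norm_num) _
      have hcr : c ^ r = 1/4 := aux_rpow_self (by norm_num) hrne
      have hQc : Q * c = 1 := by
        rw [hQdef, hcdef, ← Real.mul_rpow (by norm_num) (by norm_num)]
        norm_num
      have hq2 : q ^ 2 = Q := by
        rw [hqdef, hQdef, aux_rpow_pow (by norm_num : (0:ℝ) ≤ 2) r 2]; norm_num
      have hcr1 : c ^ (r-1) = Q / 4 := by
        apply mul_left_cancel₀ (ne_of_gt hc0)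
        have hr1 : r - 1 + 1 = r := by omega
        calc c * c ^ (r-1) = c ^ (r - 1 + 1) := (pow_succ' c (r-1)).symm
          _ = c ^ r := by rw [hr1]
          _ = 1/4 := hcr
          _ = (Q * c)/4 := by rw [hQc]
          _ = c * (Q/4) := by ring
      set x : V → ℝ := fun v => if v ∈ e ∩ f then q else if v ∈ e ∪ f then 1 else
        if v ∈ g then c else 0 with hxdef
      have hxval1 : ∀ v ∈ e ∩ f, x v = q := fun v hv => by rw [hxdef]; simp [hv]
      have hxval2 : ∀ v, v ∉ e ∩ f → v ∈ e ∪ f → x v = 1 := fun v h1 h2 => by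
        rw [hxdef]; simp [h1, h2]
      have hxval3 : ∀ v, v ∉ e ∪ f → v ∈ g → x v = c := fun v h2 h3 => by
        have h1 : v ∉ e ∩ f := fun hc => h2 (hifsub hc)
        rw [hxdef]; simp [h1, h2, h3]
      have hxval4 : ∀ v, v ∉ e ∪ f → v ∉ g → x v = 0 := fun v h2 h3 => by
        have h1 : v ∉ e ∩ f := fun hc => h2 (hifsub hc)
        rw [hxdef]; simp [h1, h2, h3]
      have hx0 : ∀ v, 0 ≤ x v := fun v => by
        rw [hxdef]; dsimp only; split_ifs <;> [linarith; norm_num; linarith; norm_num]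
      have hxg : ∀ v ∈ g, c ≤ x v := by
        intro v hv
        by_cases h1 : v ∈ e ∩ f
        · rw [hxval1 v h1]; linarith
        · by_cases h2 : v ∈ e ∪ f
          · rw [hxval2 v h1 h2]; linarith
          · rw [hxval3 v h2 hv]
      obtain ⟨p, hp⟩ := Finset.card_pos.mp (show 0 < (e ∩ f).card by omega)
      have hrho_ge := aux_rho_ge H r hr0 huni x hx0 p
        (aux_edge_subset he (Finset.mem_of_mem_inter_left hp))
        (by rw [hxval1 p hp]; exact ne_of_gt hq0)
      -- numerator lower bound
      have hpe : ∏ v ∈ e, x v = Q := by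
        rw [← Finset.prod_sdiff (show e ∩ f ⊆ e from Finset.inter_subset_left),
          Finset.prod_eq_one (fun i hi => by
            obtain ⟨hi1, hi2⟩ := Finset.mem_sdiff.mp hi
            exact hxval2 i hi2 (Finset.mem_union_left _ hi1)), one_mul,
          Finset.prod_eq_pow_card hxval1, hs2, hq2]
      have hpf : ∏ v ∈ f, x v = Q := by
        rw [← Finset.prod_sdiff (show e ∩ f ⊆ f from Finset.inter_subset_right),
          Finset.prod_eq_one (fun i hi => by
            obtain ⟨hi1, hi2⟩ := Finset.mem_sdiff.mp hi
            exact hxval2 i hi2 (Finset.mem_union_right _ hi1)), one_mul,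
          Finset.prod_eq_pow_card hxval1, hs2, hq2]
      have hpg : Q / 4 ≤ ∏ v ∈ g, x v := by
        rw [← Finset.mul_prod_erase g x hw0g]
        have h1 : 1 ≤ x w0 := by
          by_cases h : w0 ∈ e ∩ f
          · rw [hxval1 w0 h]; exact hq1
          · rw [hxval2 w0 h hw0A]
        have h2 : c ^ (r-1) ≤ ∏ v ∈ g.erase w0, x v := by
          calc c ^ (r-1) = ∏ _v ∈ g.erase w0, c := by
                rw [Finset.prod_const, Finset.card_erase_of_mem hw0g, hcg]
            _ ≤ ∏ v ∈ g.erase w0, x v := Finset.prod_le_prod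
                (fun i _ => le_of_lt hc0)
                (fun i hi => hxg i (Finset.erase_subset _ _ hi))
        calc Q / 4 = c ^ (r-1) := hcr1.symm
          _ = 1 * c ^ (r-1) := (one_mul _).symm
          _ ≤ x w0 * ∏ v ∈ g.erase w0, x v :=
              mul_le_mul h1 h2 (by positivity) (by linarith)
      have hNlow : 9 * Q / 4 ≤ ∑ e' ∈ H.edges, ∏ v ∈ e', x v := by
        have hfg : f ∉ ({g} : Finset (Finset V)) := by
          rw [Finset.mem_singleton]; exact fun h => hgf h.symm
        have hefg : e ∉ ({f, g} : Finset (Finset V)) := by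
          rw [Finset.mem_insert, Finset.mem_singleton]
          push_neg
          exact ⟨hef, fun h => hge h.symm⟩
        have htriple : ∑ e' ∈ ({e, f, g} : Finset (Finset V)), ∏ v ∈ e', x v ≤
            ∑ e' ∈ H.edges, ∏ v ∈ e', x v := by
          refine Finset.sum_le_sum_of_subset_of_nonneg ?_
            (fun j _ _ => Finset.prod_nonneg fun i _ => hx0 i)
          intro j hj
          rw [Finset.mem_insert, Finset.mem_insert, Finset.mem_singleton] at hj
          rcases hj with rfl | rfl | rfl <;> assumption
        rw [show ({e, f, g} : Finset (Finset V)) = insert e (insert f {g}) from rfl,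
          Finset.sum_insert hefg, Finset.sum_insert hfg, Finset.sum_singleton,
          hpe, hpf] at htriple
        linarith
      -- denominator upper bound
      have hgusub : (e ∪ f) ∪ (g \ (e ∪ f)) ⊆ H.vertexSet := by
        refine Finset.union_subset
          (Finset.union_subset (aux_edge_subset he) (aux_edge_subset hf)) ?_
        exact (Finset.sdiff_subset).trans (aux_edge_subset hg)
      have hDsum : ∑ v ∈ H.vertexSet, x v ^ r =
          ∑ v ∈ (e ∪ f) ∪ (g \ (e ∪ f)), x v ^ r := by
        refine (Finset.sum_subset hgusub (fun v _ hv => ?_)).symm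
        rw [Finset.mem_union, Finset.mem_sdiff] at hv
        push_neg at hv
        obtain ⟨hv1, hv2⟩ := hv
        rw [hxval4 v hv1 (fun hvg => hv1 (hv2 hvg)), zero_pow hrne]
      have hsum1 : ∑ v ∈ e ∩ f, x v ^ r = ((e ∩ f).card : ℝ) * 2 := by
        rw [Finset.sum_congr rfl (fun v hv => by rw [hxval1 v hv, hqr]),
          Finset.sum_const, nsmul_eq_mul]
      have hsum2 : ∑ v ∈ (e ∪ f) \ (e ∩ f), x v ^ r =
          (((e ∪ f) \ (e ∩ f)).card : ℝ) := by
        rw [Finset.sum_congr rfl (fun v hv => by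
          obtain ⟨hv1, hv2⟩ := Finset.mem_sdiff.mp hv
          rw [hxval2 v hv2 hv1, one_pow]), Finset.sum_const, nsmul_eq_mul, mul_one]
      have hsum3 : ∑ v ∈ g \ (e ∪ f), x v ^ r =
          ((g \ (e ∪ f)).card : ℝ) * (1/4) := by
        rw [Finset.sum_congr rfl (fun v hv => by
          obtain ⟨hv1, hv2⟩ := Finset.mem_sdiff.mp hv
          rw [hxval3 v hv2 hv1, hcr]), Finset.sum_const, nsmul_eq_mul]
      have hkcard : (g \ (e ∪ f)).card + 1 ≤ r := by
        have hsubg : g \ (e ∪ f) ⊆ g.erase w0 := by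
          intro v hv
          obtain ⟨hv1, hv2⟩ := Finset.mem_sdiff.mp hv
          exact Finset.mem_erase.mpr ⟨fun h => hv2 (h ▸ hw0A), hv1⟩
        have := Finset.card_le_card hsubg
        rw [Finset.card_erase_of_mem hw0g, hcg] at this
        omega
      have hc1' : (e ∪ f).card + (e ∩ f).card = 2 * r := by
        rw [Finset.card_union_add_card_inter, hce, hcf]; ring
      have hc2' : ((e ∪ f) \ (e ∩ f)).card = (e ∪ f).card - (e ∩ f).card :=
        Finset.card_sdiff_of_subset hifsub
      have hc3' : (e ∩ f).card ≤ (e ∪ f).card := Finset.card_le_card hifsub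
      have hc4' : ((e ∪ f) \ (e ∩ f)).card + 4 = 2 * r := by omega
      have hEF : ∑ v ∈ e ∪ f, x v ^ r = 4 + (((e ∪ f) \ (e ∩ f)).card : ℝ) := by
        rw [show e ∪ f = (e ∩ f) ∪ ((e ∪ f) \ (e ∩ f)) from
            (Finset.union_sdiff_of_subset hifsub).symm,
          Finset.sum_union Finset.disjoint_sdiff, hsum1, hsum2, hs2,
          Finset.union_sdiff_cancel_left Finset.disjoint_sdiff]
        norm_num
      have hDle : ∑ v ∈ H.vertexSet, x v ^ r ≤ (9 * (r:ℝ) - 1)/4 := by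
        rw [hDsum, Finset.sum_union Finset.disjoint_sdiff, hEF, hsum3]
        have hm : (((e ∪ f) \ (e ∩ f)).card : ℝ) + 4 = 2 * r := by exact_mod_cast hc4'
        have hk : ((g \ (e ∪ f)).card : ℝ) + 1 ≤ (r:ℝ) := by exact_mod_cast hkcard
        linarith
      have hD0 : (0:ℝ) < ∑ v ∈ H.vertexSet, x v ^ r := by
        have h1 : 0 < x p ^ r := by
          rw [hxval1 p hp]; positivity
        exact lt_of_lt_of_le h1 (Finset.single_le_sum
          (fun i _ => pow_nonneg (hx0 i) r)
          (aux_edge_subset he (Finset.mem_of_mem_inter_left hp)))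
      have hN0 : (0:ℝ) ≤ ∑ e' ∈ H.edges, ∏ v ∈ e', x v :=
        Finset.sum_nonneg fun j _ => Finset.prod_nonneg fun i _ => hx0 i
      have hden : (0:ℝ) < 9 * (r:ℝ) - 1 := by linarith
      have hratio : (9 * Q / 4) / ((9 * (r:ℝ) - 1)/4) ≤
          (∑ e' ∈ H.edges, ∏ v ∈ e', x v) / (∑ v ∈ H.vertexSet, x v ^ r) :=
        div_le_div₀ hN0 hNlow hD0 hDle
      have hkey : (Nat.factorial (r-1) : ℝ) * ((9*(r:ℝ)/(9*(r:ℝ)-1)) * Q) ≤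
          H.spectralRadius r := by
        calc (Nat.factorial (r-1) : ℝ) * ((9*(r:ℝ)/(9*(r:ℝ)-1)) * Q)
            = (Nat.factorial r : ℝ) * ((9 * Q / 4) / ((9 * (r:ℝ) - 1)/4)) := by
              rw [hfac]; field_simp
          _ ≤ (Nat.factorial r : ℝ) *
              ((∑ e' ∈ H.edges, ∏ v ∈ e', x v) / (∑ v ∈ H.vertexSet, x v ^ r)) :=
              mul_le_mul_of_nonneg_left hratio (by positivity)
          _ ≤ H.spectralRadius r := hrho_ge
      have hlt := mul_lt_mul_of_pos_left (aux_keyB r hr) hfacpos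
      rw [hQdef] at hkey
      linarith
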